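/- arXiv:2405.19622 — 2 statements merged into one kernel-verified Lean document; each statement's English description precedes it below -/
import Mathlib

section
/- For every integer n ≥ 1, there exists an NFA with n states and n letters that admits a mortal word and whose shortest mortal word has length exactly 2^n - 1. -/
/-!
Order the states `q₁ < ⋯ < qₙ` and read a set of states `S` as the binary number with digit
`2 ^ (n - i)` at `qᵢ`. The letter `aⱼ` sends `S` to all of `Q` if `S` contains a state above
`qⱼ`; otherwise it fixes `S` when `qⱼ ∉ S`, and when `qⱼ` is the largest state of `S` it
replaces `qⱼ` by all the states above it, which subtracts exactly one. Hence no letter lowers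
the number by more than one, while `Q` is worth `2 ^ n - 1`. Conversely the words
`u₀ = ε`, `uₖ₊₁ = uₖ aₙ₋ₖ uₖ` count down from `Q` to `∅` one step at a time.
-/

/-- The action of an NFA with transition function `Δ` on a set of states,
extended homomorphically to words. -/
def wordImage {Q σ : Type*} (Δ : Q → σ → Set Q) : Set Q → List σ → Set Q
  | S, [] => S
  | S, a :: w => wordImage Δ (⋃ q ∈ S, Δ q a) w

open Set

theorem wordImage_append {Q σ : Type*} (Δ : Q → σ → Set Q) (S : Set Q) (u v : List σ) :
    wordImage Δ S (u ++ v) = wordImage Δ (wordImage Δ S u) v := by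
  induction u generalizing S with
  | nil => rfl
  | cons a u ih => exact ih _

section CounterAutomaton

variable {Q : Type*} [LinearOrder Q]

/-- With `Q = Fin n` this is the automaton of the statement, with `q_i` and `a_i` both
indexed by `i - 1`. -/
def counterNFA : Q → Q → Set Q := fun q a =>
  if a < q then univ else if q < a then {q} else Ioi q

theorem wordImage_counterNFA_of_lt_mem {S : Set Q} {a i : Q} (hi : i ∈ S) (hai : a < i) :
    wordImage counterNFA S [a] = univ :=
  eq_univ_of_forall fun _ => mem_biUnion hi (by simp [counterNFA, hai])

theorem wordImage_counterNFA_of_forall_lt {S : Set Q} {a : Q} (hS : ∀ q ∈ S, q < a) :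
    wordImage counterNFA S [a] = S := by
  ext x
  simp only [wordImage, mem_iUnion, exists_prop]
  constructor
  · rintro ⟨q, hq, hx⟩
    simp only [counterNFA, if_neg (not_lt_of_gt (hS q hq)), if_pos (hS q hq),
      mem_singleton_iff] at hx
    exact hx ▸ hq
  · intro hx
    exact ⟨x, hx, by simp [counterNFA, hS x hx, not_lt_of_gt (hS x hx)]⟩

theorem wordImage_counterNFA_insert_of_forall_lt {S : Set Q} {a : Q} (hS : ∀ q ∈ S, q < a) :
    wordImage counterNFA (insert a S) [a] = S ∪ Ioi a := by
  have hdiag : counterNFA a a = Ioi a := by simp [counterNFA]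
  have hS' := wordImage_counterNFA_of_forall_lt hS
  simp only [wordImage] at hS' ⊢
  rw [biUnion_insert, hdiag, hS', union_comm]

def counterWord {α : Type*} : List α → List α
  | [] => []
  | a :: l => counterWord l ++ [a] ++ counterWord l

theorem length_counterWord {α : Type*} (l : List α) :
    (counterWord l).length = 2 ^ l.length - 1 := by
  induction l with
  | nil => rfl
  | cons a l ih =>
    have : 1 ≤ 2 ^ l.length := Nat.one_le_two_pow
    simp only [counterWord, List.length_append, List.length_cons, List.length_nil, ih, pow_succ]
    omega

theorem wordImage_counterWord {l : List Q} (hl : l.Pairwise (· < ·))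
    (hup : IsUpperSet {x | x ∈ l}) {A : Set Q} (hA : ∀ a ∈ A, ∀ x ∈ l, a < x) :
    wordImage counterNFA (A ∪ {x | x ∈ l}) (counterWord l) = A := by
  induction l generalizing A with
  | nil => simp [counterWord, wordImage]
  | cons j l ih =>
    rw [List.pairwise_cons] at hl
    have hIoi : {x | x ∈ l} = Ioi j := by
      ext x
      refine ⟨hl.1 x, fun hx => ?_⟩
      have := hup (le_of_lt hx) List.mem_cons_self
      exact (List.mem_cons.1 this).resolve_left (ne_of_gt hx)
    have hup' : IsUpperSet {x | x ∈ l} := hIoi ▸ isUpperSet_Ioi j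
    have hjA : ∀ a ∈ insert j A, ∀ x ∈ l, a < x := by
      rintro a (rfl | ha) x hx
      · exact hl.1 x hx
      · exact hA a ha x (List.mem_cons_of_mem _ hx)
    have hAj : ∀ a ∈ A, a < j := fun a ha => hA a ha j List.mem_cons_self
    have hAl : ∀ a ∈ A, ∀ x ∈ l, a < x :=
      fun a ha x hx => hA a ha x (List.mem_cons_of_mem _ hx)
    have hset : A ∪ {x | x ∈ j :: l} = insert j A ∪ {x | x ∈ l} := by
      ext; simp only [mem_union, mem_insert_iff, mem_ofPred_eq, List.mem_cons]; tauto
    calc wordImage counterNFA (A ∪ {x | x ∈ j :: l}) (counterWord l ++ [j] ++ counterWord l)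
        = wordImage counterNFA (wordImage counterNFA (insert j A) [j]) (counterWord l) := by
          rw [hset, wordImage_append, wordImage_append, ih hl.2 hup' hjA]
      _ = wordImage counterNFA (A ∪ {x | x ∈ l}) (counterWord l) := by
          rw [wordImage_counterNFA_insert_of_forall_lt hAj, hIoi]
      _ = A := ih hl.2 hup' hAl

end CounterAutomaton

section Potential

variable {Q : Type*} [LinearOrder Q]

noncomputable def potential (S : Set Q) : ℕ := ∑ᶠ i ∈ S, 2 ^ (Ioi i).ncard

theorem potential_empty : potential (∅ : Set Q) = 0 := finsum_mem_empty

theorem potential_union {S T : Set Q} (h : Disjoint S T) (hS : S.Finite) (hT : T.Finite) :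
    potential (S ∪ T) = potential S + potential T :=
  finsum_mem_union h hS hT

theorem potential_insert {S : Set Q} {a : Q} (ha : a ∉ S) (hS : S.Finite) :
    potential (insert a S) = 2 ^ (Ioi a).ncard + potential S :=
  finsum_mem_insert _ ha hS

theorem potential_mono [Finite Q] {S T : Set Q} (h : S ⊆ T) : potential S ≤ potential T := by
  rw [← union_sdiff_cancel h, potential_union disjoint_sdiff_right (toFinite _) (toFinite _)]
  exact Nat.le_add_right _ _

theorem potential_coe_of_isUpperSet (U : Finset Q) (hU : IsUpperSet (U : Set Q)) :
    potential (U : Set Q) = 2 ^ U.card - 1 := by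
  classical
  induction U using Finset.induction_on_min with
  | empty => simp [potential_empty]
  | insert a s has ih =>
    have hIoi : Ioi a = s := by
      refine Subset.antisymm (fun x hx => ?_) fun x hx => has x hx
      have := hU (le_of_lt hx) (Finset.mem_coe.2 (Finset.mem_insert_self a s))
      exact (Finset.mem_insert.1 this).resolve_left (ne_of_gt hx)
    have ha : a ∉ s := fun h => lt_irrefl a (has a h)
    have hpow : 1 ≤ 2 ^ s.card := Nat.one_le_two_pow
    rw [Finset.coe_insert, potential_insert ha s.finite_toSet, ih (hIoi ▸ isUpperSet_Ioi a),
      hIoi, ncard_coe_finset, Finset.card_insert_of_notMem ha, pow_succ]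
    omega

theorem potential_of_isUpperSet {U : Set Q} (hf : U.Finite) (hU : IsUpperSet U) :
    potential U = 2 ^ U.ncard - 1 := by
  obtain ⟨s, rfl⟩ := hf.exists_finset_coe
  rw [ncard_coe_finset, potential_coe_of_isUpperSet s hU]

theorem potential_le_potential_wordImage_add_one [Finite Q] (S : Set Q) (a : Q) :
    potential S ≤ potential (wordImage counterNFA S [a]) + 1 := by
  by_cases hbig : ∃ i ∈ S, a < i
  · obtain ⟨i, hi, hai⟩ := hbig
    rw [wordImage_counterNFA_of_lt_mem hi hai]
    exact (potential_mono (subset_univ S)).trans (Nat.le_succ _)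
  push Not at hbig
  have hlt : ∀ q ∈ S \ {a}, q < a := fun q hq => lt_of_le_of_ne (hbig q hq.1) hq.2
  by_cases haS : a ∈ S
  · have hdisj : Disjoint (S \ {a}) (Ioi a) :=
      disjoint_left.2 fun q hq hq' => lt_asymm (hlt q hq) hq'
    rw [← insert_sdiff_self_of_mem haS, wordImage_counterNFA_insert_of_forall_lt hlt,
      potential_insert (fun h => h.2 rfl) (toFinite _),
      potential_union hdisj (toFinite _) (toFinite _),
      potential_of_isUpperSet (toFinite _) (isUpperSet_Ioi a)]
    have : 1 ≤ 2 ^ (Ioi a).ncard := Nat.one_le_two_pow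
    omega
  · rw [← sdiff_singleton_eq_self haS, wordImage_counterNFA_of_forall_lt hlt]
    exact Nat.le_succ _

theorem potential_le_length [Finite Q] {S : Set Q} {w : List Q}
    (h : wordImage counterNFA S w = ∅) : potential S ≤ w.length := by
  induction w generalizing S with
  | nil => simp [show S = ∅ from h, potential_empty]
  | cons a w ih =>
    have := potential_le_potential_wordImage_add_one S a
    have := ih (S := wordImage counterNFA S [a]) h
    simp only [List.length_cons]
    omega

end Potential

theorem stmt4_general (n : ℕ) :
    ∃ Δ : Fin n → Fin n → Set (Fin n),
      ∃ w : List (Fin n), wordImage Δ Set.univ w = ∅ ∧ w.length = 2 ^ n - 1 ∧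
        ∀ v : List (Fin n), wordImage Δ Set.univ v = ∅ → 2 ^ n - 1 ≤ v.length := by
  have hrange : {x | x ∈ List.finRange n} = univ := eq_univ_of_forall List.mem_finRange
  refine ⟨counterNFA, counterWord (List.finRange n), ?_, ?_, fun v hv => ?_⟩
  · simpa [hrange] using wordImage_counterWord (List.pairwise_lt_finRange n)
      (hrange ▸ isUpperSet_univ) (A := ∅) (by simp)
  · rw [length_counterWord, List.length_finRange]
  · simpa [potential_of_isUpperSet (toFinite _) isUpperSet_univ] using potential_le_length hv

/-- For every `n ≥ 1` there is an NFA with `n` states and `n` letters whose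
shortest mortal word has length exactly `2 ^ n - 1`. -/
theorem stmt4 (n : ℕ) (hn : 1 ≤ n) :
    ∃ Δ : Fin n → Fin n → Set (Fin n),
      ∃ w : List (Fin n), wordImage Δ Set.univ w = ∅ ∧ w.length = 2 ^ n - 1 ∧
        ∀ v : List (Fin n), wordImage Δ Set.univ v = ∅ → 2 ^ n - 1 ≤ v.length :=
  stmt4_general n
end

section
/- A word w is D1-directing for a total NFA 𝒜 with a sink state q if and only if w is mortal for the NFA obtained from 𝒜 by removing state q (and all transitions into and out of q). -/
theorem wordImage_iUnion {Q σ ι : Type*} (Δ : Q → σ → Set Q) (S : ι → Set Q) (w : List σ) :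
    wordImage Δ (⋃ i, S i) w = ⋃ i, wordImage Δ (S i) w := by
  induction w generalizing S with
  | nil => rfl
  | cons a w ih =>
    show wordImage Δ (⋃ p ∈ ⋃ i, S i, Δ p a) w = _
    rw [Set.biUnion_iUnion]
    exact ih _

theorem wordImage_union {Q σ : Type*} (Δ : Q → σ → Set Q) (S T : Set Q) (w : List σ) :
    wordImage Δ (S ∪ T) w = wordImage Δ S w ∪ wordImage Δ T w := by
  rw [Set.union_eq_iUnion, wordImage_iUnion, Set.union_eq_iUnion]
  exact Set.iUnion_congr fun b => by cases b <;> rfl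

theorem wordImage_mono {Q σ : Type*} (Δ : Q → σ → Set Q) {S T : Set Q} (h : S ⊆ T)
    (w : List σ) : wordImage Δ S w ⊆ wordImage Δ T w := by
  rw [← Set.union_eq_self_of_subset_left h, wordImage_union]
  exact Set.subset_union_left

theorem wordImage_sink {Q σ : Type*} {Δ : Q → σ → Set Q} {q : Q}
    (hsink : ∀ a : σ, Δ q a = {q}) (w : List σ) : wordImage Δ {q} w = {q} := by
  induction w with
  | nil => rfl
  | cons a w ih =>
    show wordImage Δ (⋃ p ∈ ({q} : Set Q), Δ p a) w = {q}
    simpa [hsink a] using ih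

theorem wordImage_nonempty {Q σ : Type*} {Δ : Q → σ → Set Q}
    (htotal : ∀ (p : Q) (a : σ), Δ p a ≠ ∅) {S : Set Q} (hS : S.Nonempty)
    (w : List σ) : (wordImage Δ S w).Nonempty := by
  induction w generalizing S with
  | nil => exact hS
  | cons a w ih =>
    apply ih
    obtain ⟨p, hp⟩ := hS
    obtain ⟨x, hx⟩ := Set.nonempty_iff_ne_empty.2 (htotal p a)
    exact ⟨x, Set.mem_biUnion hp hx⟩

theorem wordImage_diff_sink {Q σ : Type*} {Δ : Q → σ → Set Q} {q : Q}
    (hsink : ∀ a : σ, Δ q a = {q}) (T : Set Q) (w : List σ) :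
    wordImage Δ (T \ {q}) w \ {q} = wordImage Δ T w \ {q} := by
  apply Set.Subset.antisymm
  · exact Set.diff_subset_diff_left (wordImage_mono Δ Set.diff_subset w)
  · intro x hx
    have h1 : T ⊆ (T \ {q}) ∪ {q} := by
      intro y hy
      by_cases hyq : y = q
      · exact Or.inr hyq
      · exact Or.inl ⟨hy, hyq⟩
    have h2 := wordImage_mono Δ h1 w hx.1
    rw [wordImage_union, wordImage_sink hsink] at h2
    rcases h2 with h | h
    · exact ⟨h, hx.2⟩
    · exact absurd h hx.2

theorem wordImage_restrict {Q σ : Type*} (Δ : Q → σ → Set Q) (q : Q)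
    (hsink : ∀ a : σ, Δ q a = {q}) (S' : Set {x : Q // x ≠ q}) (w : List σ) :
    Subtype.val '' wordImage
        (fun (p : {x : Q // x ≠ q}) (a : σ) => {h : {x : Q // x ≠ q} | (h : Q) ∈ Δ p a})
        S' w = wordImage Δ (Subtype.val '' S') w \ {q} := by
  induction w generalizing S' with
  | nil =>
    ext x
    simp only [wordImage, Set.mem_diff, Set.mem_singleton_iff]
    constructor
    · rintro ⟨⟨y, hy⟩, hmem, rfl⟩
      exact ⟨⟨⟨y, hy⟩, hmem, rfl⟩, hy⟩
    · rintro ⟨⟨⟨y, hy⟩, hmem, rfl⟩, _⟩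
      exact ⟨⟨y, hy⟩, hmem, rfl⟩
  | cons a w ih =>
    show Subtype.val '' wordImage _ (⋃ p ∈ S', _) w
        = wordImage Δ (⋃ p ∈ Subtype.val '' S', Δ p a) w \ {q}
    rw [ih]
    have himg : Subtype.val '' (⋃ p ∈ S', {h : {x : Q // x ≠ q} | (h : Q) ∈ Δ p a})
        = (⋃ p ∈ Subtype.val '' S', Δ p a) \ {q} := by
      ext x
      simp only [Set.mem_image, Set.mem_iUnion, Set.mem_setOf_eq, Set.mem_diff,
        Set.mem_singleton_iff]
      constructor
      · rintro ⟨⟨y, hy⟩, ⟨⟨z, hz⟩, hzS, hmem⟩, rfl⟩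
        exact ⟨⟨z, ⟨⟨z, hz⟩, hzS, rfl⟩, hmem⟩, hy⟩
      · rintro ⟨⟨z, ⟨⟨z', hz'⟩, hzS, rfl⟩, hmem⟩, hxq⟩
        exact ⟨⟨x, hxq⟩, ⟨⟨z', hz'⟩, hzS, hmem⟩, rfl⟩
    rw [himg, wordImage_diff_sink hsink]

/-- A word is D1-directing for a total NFA with a sink state `q` iff it is
mortal for the NFA obtained by removing the state `q`. -/
theorem stmt10 {Q σ : Type*} (Δ : Q → σ → Set Q) (q : Q)
    (htotal : ∀ (p : Q) (a : σ), Δ p a ≠ ∅)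
    (hsink : ∀ a : σ, Δ q a = {q}) (w : List σ) :
    (∃ q₀ : Q, ∀ p : Q, wordImage Δ {p} w = {q₀}) ↔
      wordImage
        (fun (p : {x : Q // x ≠ q}) (a : σ) => {h : {x : Q // x ≠ q} | (h : Q) ∈ Δ p a})
        Set.univ w = ∅ := by
  constructor
  · rintro ⟨q₀, hq₀⟩
    have hq : q₀ = q := by
      have h := hq₀ q
      rw [wordImage_sink hsink] at h
      exact (Set.singleton_eq_singleton_iff.1 h.symm)
    simp only [hq] at hq₀
    rw [← Set.image_eq_empty (f := Subtype.val), wordImage_restrict Δ q hsink,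
      Set.diff_eq_empty]
    intro x hx
    have hdecomp : (Subtype.val '' (Set.univ : Set {x : Q // x ≠ q}))
        = ⋃ p ∈ Subtype.val '' (Set.univ : Set {x : Q // x ≠ q}), ({p} : Set Q) := by
      ext y; simp
    rw [hdecomp, Set.biUnion_eq_iUnion, wordImage_iUnion] at hx
    obtain ⟨p, hp⟩ := Set.mem_iUnion.1 hx
    rw [hq₀ p] at hp
    exact hp
  · intro hmortal
    refine ⟨q, fun p => ?_⟩
    by_cases hp : p = q
    · subst hp; exact wordImage_sink hsink w
    · have hsub : wordImage Δ {p} w \ {q}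
          = Subtype.val '' wordImage
            (fun (p : {x : Q // x ≠ q}) (a : σ) => {h : {x : Q // x ≠ q} | (h : Q) ∈ Δ p a})
            {⟨p, hp⟩} w := by
        rw [wordImage_restrict Δ q hsink]
        simp
      have hempty : wordImage Δ {p} w \ {q} = ∅ := by
        rw [hsub]
        have hm := wordImage_mono
          (fun (p : {x : Q // x ≠ q}) (a : σ) => {h : {x : Q // x ≠ q} | (h : Q) ∈ Δ p a})
          (Set.subset_univ {⟨p, hp⟩}) w
        rw [hmortal, Set.subset_empty_iff] at hm
        rw [hm, Set.image_empty]
      rw [Set.diff_eq_empty] at hempty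
      obtain ⟨x, hx⟩ := wordImage_nonempty htotal (Set.singleton_nonempty p) w
      have hxq : x = q := hempty hx
      subst hxq
      exact Set.Subset.antisymm hempty (Set.singleton_subset_iff.2 hx)
end
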